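/- arXiv:2105.05586 — 2 statements merged into one kernel-verified Lean document; each statement's English description precedes it below -/
import Mathlib

section
/- Let f, g be locally Lipschitz vector fields on ℝⁿ, let u : ℝⁿ → ℝᵐ be a Lipschitz continuous feedback controller, let h : ℝⁿ → ℝ be continuously differentiable, and let γ be an extended class-K∞ function. Suppose that for every z ∈ ℝⁿ the closed-loop CBF condition Dh(z)[f(z) + g(z)u(z)] ≥ −γ(h(z)) holds, where Dh(z) denotes the Fréchet derivative of h at z. If x : [0, T) → ℝⁿ is differentiable and satisfies the closed-loop dynamics x'(t) = f(x(t)) + g(x(t))u(x(t)) for all t ∈ [0, T), and h(x(0)) ≥ 0, then h(x(t)) ≥ 0 for all t ∈ [0, T); that is, the controller renders the zero superlevel set C = {z : h(z) ≥ 0} forward invariant. -/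
/-!
Along a closed-loop trajectory, `φ = h ∘ x` satisfies `φ' ≥ -γ(φ)`, and `-γ(φ) > 0` wherever
`φ < 0` because `γ` is increasing with `γ 0 = 0`. So `φ` cannot decrease while it is negative,
and starting from `φ 0 ≥ 0` it never becomes negative.
-/

open Set

/- Real induction on `{t | 0 ≤ φ t}`: a time with `0 ≤ φ` cannot be followed by a stretch where
`φ < 0`, on which `φ` would be nondecreasing. -/
theorem nonneg_of_deriv_nonneg_of_neg {φ φ' : ℝ → ℝ} {a b : ℝ}
    (hcont : ContinuousOn φ (Icc a b)) (hderiv : ∀ t ∈ Ioo a b, HasDerivAt φ (φ' t) t)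
    (ha : 0 ≤ φ a) (hφ' : ∀ t ∈ Ioo a b, φ t < 0 → 0 ≤ φ' t) :
    ∀ t ∈ Icc a b, 0 ≤ φ t := by
  show Icc a b ⊆ φ ⁻¹' Ici 0
  refine IsClosed.Icc_subset_of_forall_exists_gt ?_ ha ?_
  · rw [inter_comm]
    exact hcont.preimage_isClosed_of_isClosed isClosed_Icc isClosed_Ici
  rintro s ⟨hs, hsa, hsb⟩ y hy
  by_contra hneg
  set c := min y b
  have hsc : s < c := lt_min hy hsb
  have hcb : c ≤ b := min_le_right y b
  have hφc : φ c < 0 := by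
    by_contra! hc
    exact hneg ⟨c, hc, hsc, min_le_left y b⟩
  have hsub : Ioo s c ⊆ Ioo a b := Ioo_subset_Ioo hsa hcb
  have hmono : MonotoneOn φ (Icc s c) := by
    refine monotoneOn_of_hasDerivWithinAt_nonneg (f' := φ') (convex_Icc s c)
      (hcont.mono (Icc_subset_Icc hsa hcb)) (fun t ht ↦ ?_) (fun t ht ↦ ?_)
    · rw [interior_Icc] at ht ⊢
      exact (hderiv t (hsub ht)).hasDerivWithinAt
    · rw [interior_Icc] at ht
      refine hφ' t (hsub ht) (not_le.mp fun ht0 ↦ hneg ⟨t, ht0, ht.1, ?_⟩)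
      exact ht.2.le.trans (min_le_left y b)
  linarith [show 0 ≤ φ s from hs, hmono ⟨le_rfl, hsc.le⟩ ⟨hsc.le, le_rfl⟩ hsc.le]

theorem cbf_forward_invariance_general
    {n m : ℕ}
    (f : (Fin n → ℝ) → (Fin n → ℝ))
    (g : (Fin n → ℝ) → ((Fin m → ℝ) →L[ℝ] (Fin n → ℝ)))
    (u : (Fin n → ℝ) → (Fin m → ℝ))
    (h : (Fin n → ℝ) → ℝ)
    (γ : ℝ → ℝ)
    (hh : ContDiff ℝ 1 h)
    (hγ_mono : StrictMono γ) (hγ_zero : γ 0 = 0)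
    (hcbf : ∀ z : Fin n → ℝ, fderiv ℝ h z (f z + g z (u z)) ≥ -γ (h z))
    (T : ℝ)
    (x : ℝ → (Fin n → ℝ))
    (hx : ∀ t ∈ Set.Ico (0 : ℝ) T, HasDerivAt x (f (x t) + g (x t) (u (x t))) t)
    (h0 : h (x 0) ≥ 0) :
    ∀ t ∈ Set.Ico (0 : ℝ) T, h (x t) ≥ 0 := by
  have hφ : ∀ r ∈ Ico 0 T, HasDerivAt (fun r ↦ h (x r))
      (fderiv ℝ h (x r) (f (x r) + g (x r) (u (x r)))) r := fun r hr ↦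
    (hh.differentiable one_ne_zero (x r)).hasFDerivAt.comp_hasDerivAt r (hx r hr)
  intro t ht
  have hsub : Icc 0 t ⊆ Ico 0 T := Icc_subset_Ico_right ht.2
  refine nonneg_of_deriv_nonneg_of_neg (φ := fun r ↦ h (x r))
    (fun r hr ↦ (hφ r (hsub hr)).continuousAt.continuousWithinAt)
    (fun r hr ↦ hφ r (hsub (Ioo_subset_Icc_self hr))) h0 (fun r _ hr ↦ ?_) t ⟨ht.1, le_rfl⟩
  have hγ_neg : γ (h (x r)) < 0 := (hγ_mono hr).trans_eq hγ_zero
  linarith [hcbf (x r)]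

/-- Forward-invariance part of CBF Theorem 1: a Lipschitz controller satisfying the
closed-loop CBF condition renders the zero superlevel set of `h` forward invariant. -/
theorem cbf_forward_invariance
    {n m : ℕ}
    (f : (Fin n → ℝ) → (Fin n → ℝ))
    (g : (Fin n → ℝ) → ((Fin m → ℝ) →L[ℝ] (Fin n → ℝ)))
    (u : (Fin n → ℝ) → (Fin m → ℝ))
    (h : (Fin n → ℝ) → ℝ)
    (γ : ℝ → ℝ)
    (hf : LocallyLipschitz f)
    (hg : LocallyLipschitz g)
    (hu : ∃ K : NNReal, LipschitzWith K u)
    (hh : ContDiff ℝ 1 h)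
    (hγ_cont : Continuous γ) (hγ_mono : StrictMono γ) (hγ_zero : γ 0 = 0)
    (hcbf : ∀ z : Fin n → ℝ, fderiv ℝ h z (f z + g z (u z)) ≥ -γ (h z))
    (T : ℝ)
    (x : ℝ → (Fin n → ℝ))
    (hx : ∀ t ∈ Set.Ico (0 : ℝ) T, HasDerivAt x (f (x t) + g (x t) (u (x t))) t)
    (h0 : h (x 0) ≥ 0) :
    ∀ t ∈ Set.Ico (0 : ℝ) T, h (x t) ≥ 0 :=
  cbf_forward_invariance_general f g u h γ hh hγ_mono hγ_zero hcbf T x hx h0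
end

section
/- Let f, g be locally Lipschitz vector fields on ℝⁿ, let u : ℝⁿ → ℝᵐ be a Lipschitz continuous feedback controller, let h : ℝⁿ → ℝ be continuously differentiable, and let γ be an extended class-K∞ function. Suppose that for every z ∈ ℝⁿ the closed-loop CBF condition Dh(z)[f(z) + g(z)u(z)] ≥ −γ(h(z)) holds. If x : [0, ∞) → ℝⁿ is differentiable, satisfies x'(t) = f(x(t)) + g(x(t))u(x(t)) for all t ≥ 0, then liminf_{t → ∞} h(x(t)) ≥ 0; in particular, for every ε > 0 there exists T ≥ 0 such that h(x(t)) ≥ −ε for all t ≥ T. That is, the set C = {z : h(z) ≥ 0} is attractive for the closed-loop system. -/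
/-!
Along a solution, `φ = h ∘ x` satisfies `φ' ≥ -γ(φ)`. Fix `ε > 0`. Wherever `φ ≤ -ε` this gives
`φ' ≥ -γ(-ε) > 0`, so `φ` grows at least linearly until it reaches the level `-ε` in finite time,
and it can never cross that level downwards afterwards.
-/

open Filter Set

theorem liminf_nonneg_of_forall_eventually_neg_le {α : Type*} {l : Filter α} {φ : α → ℝ}
    (h : ∀ ε > 0, ∀ᶠ t in l, -ε ≤ φ t) : 0 ≤ l.liminf φ := by
  refine le_of_forall_sub_le fun ε hε => ?_
  rw [zero_sub, liminf_eq]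
  by_cases hbdd : BddAbove {a | ∀ᶠ t in l, a ≤ φ t}
  · exact le_csSup hbdd (h ε hε)
  · -- junk value: the `sSup` of an unbounded set of reals is `0`
    rw [Real.sSup_of_not_bddAbove hbdd]
    linarith

section DifferentialInequality

variable {φ φ' : ℝ → ℝ} {a c : ℝ}

theorem le_apply_of_deriv_pos_at_level (hφ : ∀ t ≥ a, HasDerivAt φ (φ' t) t)
    (hpos : ∀ t ≥ a, φ t = c → 0 < φ' t) (ha : c ≤ φ a) {t : ℝ} (ht : a ≤ t) : c ≤ φ t := by
  have hφ_Icc : ∀ s ∈ Icc a t, HasDerivAt φ (φ' s) s := fun s hs => hφ s hs.1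
  have := image_le_of_deriv_right_lt_deriv_boundary (f := fun s => -φ s) (f' := fun s => -φ' s)
    (B := fun _ => -c) (B' := fun _ => 0)
    (fun s hs => (hφ_Icc s hs).continuousAt.continuousWithinAt.neg)
    (fun s hs => (hφ_Icc s (Ico_subset_Icc_self hs)).neg.hasDerivWithinAt)
    (neg_le_neg ha) (fun _ => hasDerivAt_const _ _)
    (fun s hs hs_eq => neg_neg_of_pos (hpos s hs.1 (neg_inj.1 hs_eq))) (right_mem_Icc.2 ht)
  exact neg_le_neg_iff.1 this

theorem exists_le_apply_of_deriv_ge_below {δ : ℝ} (hδ : 0 < δ)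
    (hφ : ∀ t ≥ a, HasDerivAt φ (φ' t) t) (hlow : ∀ t ≥ a, φ t < c → δ ≤ φ' t) :
    ∃ T ≥ a, c ≤ φ T := by
  by_contra! hbelow
  set T := a + (c - φ a) / δ
  have haT : a ≤ T := le_add_of_nonneg_right (div_nonneg (sub_nonneg.2 (hbelow a le_rfl).le) hδ.le)
  have hφ_Icc : ∀ s ∈ Icc a T, HasDerivAt φ (φ' s) s := fun s hs => hφ s hs.1
  have hlinear : φ a + δ * (T - a) ≤ φ T :=
    image_le_of_deriv_right_le_deriv_boundary (f := fun s => φ a + δ * (s - a)) (f' := fun _ => δ)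
      (by fun_prop) (fun s _ => by
        simpa using ((((hasDerivAt_id s).sub_const a).const_mul δ).const_add (φ a)).hasDerivWithinAt)
      (by simp) (fun s hs => (hφ_Icc s hs).continuousAt.continuousWithinAt)
      (fun s hs => (hφ_Icc s (Ico_subset_Icc_self hs)).hasDerivWithinAt)
      (fun s hs => hlow s hs.1 (hbelow s hs.1)) (right_mem_Icc.2 haT)
  have hT : φ a + δ * (T - a) = c := by
    simp only [T]
    field_simp
    ring
  exact (hbelow T haT).not_ge (hT ▸ hlinear)

theorem exists_forall_ge_neg_le_of_deriv_ge_neg {γ : ℝ → ℝ} (hγ_mono : StrictMono γ)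
    (hγ_zero : γ 0 = 0) (hφ : ∀ t ≥ a, HasDerivAt φ (φ' t) t)
    (hφ' : ∀ t ≥ a, -γ (φ t) ≤ φ' t) {ε : ℝ} (hε : 0 < ε) :
    ∃ T ≥ a, ∀ t ≥ T, -ε ≤ φ t := by
  have hγε : γ (-ε) < 0 := hγ_zero ▸ hγ_mono (neg_neg_of_pos hε)
  obtain ⟨T, haT, hT⟩ := exists_le_apply_of_deriv_ge_below (neg_pos.2 hγε) hφ
    fun t ht hlt => (neg_le_neg (hγ_mono hlt).le).trans (hφ' t ht)
  refine ⟨T, haT, fun t ht => le_apply_of_deriv_pos_at_level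
    (fun s hs => hφ s (haT.trans hs)) (fun s hs hs_eq => ?_) hT ht⟩
  have := hφ' s (haT.trans hs)
  rw [hs_eq] at this
  linarith

end DifferentialInequality

theorem cbf_attractivity_general
    {n m : ℕ}
    (f : (Fin n → ℝ) → (Fin n → ℝ))
    (g : (Fin n → ℝ) → ((Fin m → ℝ) →L[ℝ] (Fin n → ℝ)))
    (u : (Fin n → ℝ) → (Fin m → ℝ))
    (h : (Fin n → ℝ) → ℝ)
    (γ : ℝ → ℝ)
    (hh : ContDiff ℝ 1 h)
    (hγ_mono : StrictMono γ) (hγ_zero : γ 0 = 0)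
    (hcbf : ∀ z : Fin n → ℝ, fderiv ℝ h z (f z + g z (u z)) ≥ -γ (h z))
    (x : ℝ → (Fin n → ℝ))
    (hx : ∀ t : ℝ, 0 ≤ t → HasDerivAt x (f (x t) + g (x t) (u (x t))) t) :
    (0 ≤ Filter.atTop.liminf (fun t : ℝ => h (x t))) ∧
      (∀ ε : ℝ, ε > 0 → ∃ T : ℝ, 0 ≤ T ∧ ∀ t : ℝ, T ≤ t → h (x t) ≥ -ε) := by
  have hφ : ∀ t ≥ 0, HasDerivAt (fun t => h (x t))
      (fderiv ℝ h (x t) (f (x t) + g (x t) (u (x t)))) t := fun t ht =>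
    ((hh.differentiable one_ne_zero) (x t)).hasFDerivAt.comp_hasDerivAt t (hx t ht)
  have hreach : ∀ ε > 0, ∃ T ≥ 0, ∀ t ≥ T, -ε ≤ h (x t) := fun ε hε =>
    exists_forall_ge_neg_le_of_deriv_ge_neg hγ_mono hγ_zero hφ (fun t _ => hcbf (x t)) hε
  refine ⟨liminf_nonneg_of_forall_eventually_neg_le fun ε hε => ?_, hreach⟩
  obtain ⟨T, -, hT⟩ := hreach ε hε
  exact eventually_atTop.2 ⟨T, hT⟩

/-- Attractivity part of CBF Theorem 1: a Lipschitz controller satisfying the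
closed-loop CBF condition renders the set `C = {z : h z ≥ 0}` attractive:
`liminf_{t → ∞} h(x t) ≥ 0`, and in particular for every `ε > 0` there is `T ≥ 0`
such that `h (x t) ≥ -ε` for all `t ≥ T`. -/
theorem cbf_attractivity
    {n m : ℕ}
    (f : (Fin n → ℝ) → (Fin n → ℝ))
    (g : (Fin n → ℝ) → ((Fin m → ℝ) →L[ℝ] (Fin n → ℝ)))
    (u : (Fin n → ℝ) → (Fin m → ℝ))
    (h : (Fin n → ℝ) → ℝ)
    (γ : ℝ → ℝ)
    (hf : LocallyLipschitz f)
    (hg : LocallyLipschitz g)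
    (hu : ∃ K : NNReal, LipschitzWith K u)
    (hh : ContDiff ℝ 1 h)
    (hγ_cont : Continuous γ) (hγ_mono : StrictMono γ) (hγ_zero : γ 0 = 0)
    (hcbf : ∀ z : Fin n → ℝ, fderiv ℝ h z (f z + g z (u z)) ≥ -γ (h z))
    (x : ℝ → (Fin n → ℝ))
    (hx : ∀ t : ℝ, 0 ≤ t → HasDerivAt x (f (x t) + g (x t) (u (x t))) t) :
    (0 ≤ Filter.atTop.liminf (fun t : ℝ => h (x t))) ∧
      (∀ ε : ℝ, ε > 0 → ∃ T : ℝ, 0 ≤ T ∧ ∀ t : ℝ, T ≤ t → h (x t) ≥ -ε) :=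
  cbf_attractivity_general f g u h γ hh hγ_mono hγ_zero hcbf x hx
end
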